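/- Let f be an automorphism of 𝔥₄ and let (a_{ij}) be its matrix in the basis e₁,…,e₆ (so the j-th column is f(e_j)). Then a_{1j} = a_{2j} = 0 for j = 3, 4, a_{i5} = 0 for i = 1,2,3,4, and a_{i6} = 0 for i = 1,2,3,4,5; that is, e^i(f(e_j)) = 0 for i = 1,2 and j = 3,4, e^i(f(e₅)) = 0 for i = 1,…,4, and e^i(f(e₆)) = 0 for i = 1,…,5. -/
import Mathlib


open Matrix

/-- The Lie bracket of the nilpotent Lie algebra 𝔥₄ = (0,0,0,0,12,14+23) in the basis
e₁,…,e₆: the only nonzero brackets among basis vectors are [e₁,e₂] = -e₅ and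
[e₁,e₄] = [e₂,e₃] = -e₆. -/
def h4bracket (x y : Fin 6 → ℝ) : Fin 6 → ℝ :=
  ![0, 0, 0, 0, -(x 0 * y 1 - x 1 * y 0),
    -((x 0 * y 3 - x 3 * y 0) + (x 1 * y 2 - x 2 * y 1))]

/-- An automorphism of 𝔥₄, identified with its matrix in the basis e₁,…,e₆
(the j-th column is f(e_j), so the entry a_{ij} is `f (i-1) (j-1)`). -/
def IsAutH4 (f : Matrix (Fin 6) (Fin 6) ℝ) : Prop :=
  IsUnit f ∧ ∀ x y : Fin 6 → ℝ, f.mulVec (h4bracket x y) = h4bracket (f.mulVec x) (f.mulVec y)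

lemma vec6_five {α : Type*} (a b c d e g : α) : ![a,b,c,d,e,g] 5 = g := rfl

lemma vecMul_zero_imp (f : Matrix (Fin 6) (Fin 6) ℝ) (hf : IsUnit f)
    (v : Fin 6 → ℝ) (hv : v ᵥ* f = 0) : v = 0 := by
  obtain ⟨u, rfl⟩ := hf
  have h1 : (↑u : Matrix (Fin 6) (Fin 6) ℝ) * (↑u⁻¹ : Matrix (Fin 6) (Fin 6) ℝ) = 1 := u.mul_inv
  calc v = v ᵥ* ((↑u : Matrix (Fin 6) (Fin 6) ℝ) * (↑u⁻¹ : Matrix (Fin 6) (Fin 6) ℝ)) := by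
        rw [h1, Matrix.vecMul_one]
    _ = (v ᵥ* (↑u : Matrix (Fin 6) (Fin 6) ℝ)) ᵥ* (↑u⁻¹ : Matrix (Fin 6) (Fin 6) ℝ) := by
        rw [Matrix.vecMul_vecMul]
    _ = 0 := by rw [hv, Matrix.zero_vecMul]

/-- Lemma 6.1: if f is an automorphism of 𝔥₄, then e^i(f(e_j)) = 0 for i = 1,2 and
j = 3,4; e^i(f(e₅)) = 0 for i = 1,…,4; and e^i(f(e₆)) = 0 for i = 1,…,5. -/
theorem aut_h4_matrix_entries (f : Matrix (Fin 6) (Fin 6) ℝ) (hf : IsAutH4 f) :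
    (f 0 2 = 0 ∧ f 0 3 = 0 ∧ f 1 2 = 0 ∧ f 1 3 = 0) ∧
    (f 0 4 = 0 ∧ f 1 4 = 0 ∧ f 2 4 = 0 ∧ f 3 4 = 0) ∧
    (f 0 5 = 0 ∧ f 1 5 = 0 ∧ f 2 5 = 0 ∧ f 3 5 = 0 ∧ f 4 5 = 0) := by
  obtain ⟨hu, hb⟩ := hf
  have E : ∀ (x y : Fin 6 → ℝ) (i : Fin 6),
      f.mulVec (h4bracket x y) i = h4bracket (f.mulVec x) (f.mulVec y) i :=
    fun x y i => congrFun (hb x y) i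
  -- column 4 (image of e₅) : rows 0..3 vanish
  have c40 := E ![1,0,0,0,0,0] ![0,1,0,0,0,0] 0
  have c41 := E ![1,0,0,0,0,0] ![0,1,0,0,0,0] 1
  have c42 := E ![1,0,0,0,0,0] ![0,1,0,0,0,0] 2
  have c43 := E ![1,0,0,0,0,0] ![0,1,0,0,0,0] 3
  simp [h4bracket, Matrix.mulVec, dotProduct, Fin.sum_univ_six, vec6_five] at c40 c41 c42 c43
  -- column 5 (image of e₆) : rows 0..3 vanish
  have c50 := E ![1,0,0,0,0,0] ![0,0,0,1,0,0] 0
  have c51 := E ![1,0,0,0,0,0] ![0,0,0,1,0,0] 1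
  have c52 := E ![1,0,0,0,0,0] ![0,0,0,1,0,0] 2
  have c53 := E ![1,0,0,0,0,0] ![0,0,0,1,0,0] 3
  simp [h4bracket, Matrix.mulVec, dotProduct, Fin.sum_univ_six, vec6_five, c40, c41, c42, c43]
    at c50 c51 c52 c53
  -- the e₅-component equations
  have h13 := E ![1,0,0,0,0,0] ![0,0,1,0,0,0] 4
  have h14 := E ![1,0,0,0,0,0] ![0,0,0,1,0,0] 4
  have h23 := E ![0,1,0,0,0,0] ![0,0,1,0,0,0] 4
  have h24 := E ![0,1,0,0,0,0] ![0,0,0,1,0,0] 4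
  have h34 := E ![0,0,1,0,0,0] ![0,0,0,1,0,0] 4
  simp [h4bracket, Matrix.mulVec, dotProduct, Fin.sum_univ_six, vec6_five,
    c40, c41, c50, c51] at h13 h14 h23 h24 h34
  -- notation
  set a0 := f 0 0 with ha0; set a1 := f 1 0 with ha1
  set b0 := f 0 1 with hb0; set b1 := f 1 1 with hb1
  set c0 := f 0 2 with hc0; set c1 := f 1 2 with hc1
  set d0 := f 0 3 with hd0; set d1 := f 1 3 with hd1
  -- c0 = c1 = 0
  have hc : c0 = 0 ∧ c1 = 0 := by
    by_contra hcon
    have hp : f 4 5 = 0 := by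
      rcases not_and_or.mp hcon with h | h
      · have h2 : c0 * f 4 5 = 0 := by linear_combination (-c0) * h14 + d0 * h13 + a0 * h34
        exact (mul_eq_zero.mp h2).resolve_left h
      · have h2 : c1 * f 4 5 = 0 := by linear_combination (-c1) * h14 + d1 * h13 + a1 * h34
        exact (mul_eq_zero.mp h2).resolve_left h
    have hv : (![c1, -c0, 0, 0, 0, 0] : Fin 6 → ℝ) ᵥ* f = 0 := by
      funext j
      fin_cases j <;>
        simp [Matrix.vecMul, dotProduct, Fin.sum_univ_six, vec6_five, c40, c41, c50, c51] <;>
        · rw [hp] at h23 h14 <;> try skip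
          first
          | linarith [h13, h23, h34]
          | ring_nf
          | linarith [h13, h23, h34, c40, c41, c50, c51]
    have hz := vecMul_zero_imp f hu _ hv
    have hz0 : c1 = 0 := by have := congrFun hz 0; simpa using this
    have hz1 : c0 = 0 := by have := congrFun hz 1; simpa using this
    exact hcon ⟨hz1, hz0⟩
  -- d0 = d1 = 0
  have hd : d0 = 0 ∧ d1 = 0 := by
    by_contra hcon
    have hp : f 4 5 = 0 := by
      rcases not_and_or.mp hcon with h | h
      · have h2 : d0 * f 4 5 = 0 := by linear_combination (-d0) * h23 + (-b0) * h34 + c0 * h24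
        exact (mul_eq_zero.mp h2).resolve_left h
      · have h2 : d1 * f 4 5 = 0 := by linear_combination (-d1) * h23 + (-b1) * h34 + c1 * h24
        exact (mul_eq_zero.mp h2).resolve_left h
    have hv : (![d1, -d0, 0, 0, 0, 0] : Fin 6 → ℝ) ᵥ* f = 0 := by
      funext j
      fin_cases j <;>
        simp [Matrix.vecMul, dotProduct, Fin.sum_univ_six, vec6_five, c40, c41, c50, c51] <;>
        · rw [hp] at h23 h14 <;> try skip
          first
          | linarith [h14, h24, h34]
          | ring_nf
          | linarith [h14, h24, h34, c40, c41, c50, c51]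
    have hz := vecMul_zero_imp f hu _ hv
    have hz0 : d1 = 0 := by have := congrFun hz 0; simpa using this
    have hz1 : d0 = 0 := by have := congrFun hz 1; simpa using this
    exact hcon ⟨hz1, hz0⟩
  have hp : f 4 5 = 0 := by
    rw [hd.1, hd.2] at h14; linarith [h14]
  exact ⟨⟨hc.1, hd.1, hc.2, hd.2⟩, ⟨c40, c41, c42, c43⟩, ⟨c50, c51, c52, c53, hp⟩⟩
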